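/- Let κ be an uncountable regular cardinal and let (x, I) and (y, J) be κ-chopped functions. Then Match(x, I) ⊆ Match(y, J) if and only if for all but fewer than κ many intervals I_α of I there exists an interval J_β of J such that J_β ⊆ I_α and x↾J_β = y↾J_β. -/

import Mathlib

namespace GenCichon

noncomputable section

open Cardinal Set Ordinal

variable (κ : Cardinal.{0})

/-- The ordinals below `κ`, i.e. the cardinal `κ` viewed as a set of ordinals. -/
abbrev Idx : Type 1 := ↥(Set.Iio κ.ord)

/-- The generalized Cantor space `2^κ`. -/
abbrev GenCantor : Type 1 := Idx κ → Bool

/-- The generalized Baire space `κ^κ`. -/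
abbrev GenBaire : Type 1 := Idx κ → Idx κ

/-- The basic open (cylinder) set `[σ]` determined by the element `σ` of `2^{<κ}`
with domain `[0, δ)` (values of `σ` at or above `δ` are irrelevant). -/
def cyl (δ : Ordinal) (σ : Ordinal → Bool) : Set (GenCantor κ) :=
  { x | ∀ β : Idx κ, β.1 < δ → x β = σ β.1 }

/-- `A ⊆ 2^κ` is nowhere dense: every basic open set `[σ]`, `σ ∈ 2^{<κ}`, has a
basic open refinement `[σ'] ⊆ [σ]` disjoint from `A`. -/
def IsNwd (A : Set (GenCantor κ)) : Prop :=
  ∀ δ < κ.ord, ∀ σ : Ordinal → Bool, ∃ δ', δ ≤ δ' ∧ δ' < κ.ord ∧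
    ∃ σ' : Ordinal → Bool, (∀ β < δ, σ' β = σ β) ∧ cyl κ δ' σ' ∩ A = ∅

/-- `A ⊆ 2^κ` is `κ`-meager: a union of `κ` many nowhere dense sets. -/
def IsKMeager (A : Set (GenCantor κ)) : Prop :=
  ∃ B : Idx κ → Set (GenCantor κ), (∀ i, IsNwd κ (B i)) ∧ A = ⋃ i, B i

/-- The covering number of the `κ`-meager ideal. -/
def covM : Cardinal.{1} :=
  sInf { c : Cardinal.{1} | ∃ J : Set (Set (GenCantor κ)),
    (∀ A ∈ J, IsKMeager κ A) ∧ ⋃₀ J = Set.univ ∧ c = #J }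

/-- The uniformity number of the `κ`-meager ideal. -/
def nonM : Cardinal.{1} :=
  sInf { c : Cardinal.{1} | ∃ X : Set (GenCantor κ), ¬ IsKMeager κ X ∧ c = #X }

/-- The additivity number of the `κ`-meager ideal. -/
def addM : Cardinal.{1} :=
  sInf { c : Cardinal.{1} | ∃ J : Set (Set (GenCantor κ)),
    (∀ A ∈ J, IsKMeager κ A) ∧ ¬ IsKMeager κ (⋃₀ J) ∧ c = #J }

/-- The cofinality number of the `κ`-meager ideal. -/
def cofM : Cardinal.{1} :=
  sInf { c : Cardinal.{1} | ∃ J : Set (Set (GenCantor κ)),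
    (∀ A ∈ J, IsKMeager κ A) ∧ (∀ A, IsKMeager κ A → ∃ B ∈ J, A ⊆ B) ∧ c = #J }

/-- `g` eventually dominates `f` (`f <* g`). -/
def EvDom (f g : GenBaire κ) : Prop :=
  ∃ α : Idx κ, ∀ β : Idx κ, α < β → f β < g β

/-- The unbounding number `𝔟_κ`. -/
def bK : Cardinal.{1} :=
  sInf { c : Cardinal.{1} | ∃ F : Set (GenBaire κ),
    (∀ g : GenBaire κ, ∃ f ∈ F, ¬ EvDom κ f g) ∧ c = #F }

/-- The dominating number `𝔡_κ`. -/
def dK : Cardinal.{1} :=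
  sInf { c : Cardinal.{1} | ∃ F : Set (GenBaire κ),
    (∀ g : GenBaire κ, ∃ f ∈ F, EvDom κ g f) ∧ c = #F }

/-- `f` and `g` are eventually different (`f ≠* g`). -/
def EvDiff (f g : GenBaire κ) : Prop :=
  #{ α : Idx κ | f α = g α } < Cardinal.lift.{1} κ

/-- `𝔟_κ(≠*)`: least size of a family such that every `g` is cofinally matching
with some member of it. -/
def bNeq : Cardinal.{1} :=
  sInf { c : Cardinal.{1} | ∃ F : Set (GenBaire κ),
    (∀ g : GenBaire κ, ∃ f ∈ F, ¬ EvDiff κ f g) ∧ c = #F }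

/-- `𝔡_κ(≠*)`: least size of a family such that every `g` is eventually different
from some member of it. -/
def dNeq : Cardinal.{1} :=
  sInf { c : Cardinal.{1} | ∃ F : Set (GenBaire κ),
    (∀ g : GenBaire κ, ∃ f ∈ F, EvDiff κ f g) ∧ c = #F }

/-- An interval partition of `κ`: a strictly increasing continuous sequence
`(pts α : α < κ)` of ordinals below `κ` with `pts 0 = 0`; the `α`-th interval is
`[pts α, pts (α+1))`.  (Values at or above `κ` are normalized to `0`, so that an
interval partition is determined by its restriction below `κ`.) -/
structure IntervalPartition where
  pts : Ordinal → Ordinal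
  zero : pts 0 = 0
  lt_ord : ∀ α < κ.ord, pts α < κ.ord
  strictMono : ∀ α β : Ordinal, α < β → β < κ.ord → pts α < pts β
  isCont : ∀ δ < κ.ord, Order.IsSuccLimit δ → pts δ = ⨆ β : ↥(Set.Iio δ), pts β.1
  eq_zero_of_le : ∀ α, κ.ord ≤ α → pts α = 0

/-- The `β`-th interval of `J` is included in the `α`-th interval of `I`. -/
def SubIntv (J : IntervalPartition κ) (β : Ordinal) (I : IntervalPartition κ)
    (α : Ordinal) : Prop :=
  I.pts α ≤ J.pts β ∧ J.pts (β + 1) ≤ I.pts (α + 1)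

/-- `I` dominates `J` (`J ≤* I`): from some point on, every interval of `I`
contains an interval of `J`. -/
def IPDom (J I : IntervalPartition κ) : Prop :=
  ∃ γ < κ.ord, ∀ α, γ < α → α < κ.ord → ∃ β < κ.ord, SubIntv κ J β I α

/-- `y` matches the `κ`-chopped function `(x, I)`: `y` and `x` agree on cofinally
many intervals of `I`. -/
def Matches (y x : GenCantor κ) (I : IntervalPartition κ) : Prop :=
  ∀ γ < κ.ord, ∃ α, γ ≤ α ∧ α < κ.ord ∧
    ∀ β : Idx κ, I.pts α ≤ β.1 → β.1 < I.pts (α + 1) → y β = x β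

/-- The set of elements of `2^κ` matching the `κ`-chopped function `(x, I)`. -/
def MatchSet (x : GenCantor κ) (I : IntervalPartition κ) : Set (GenCantor κ) :=
  { y | Matches κ y x I }

/-- `h ∈ κ^κ` tends to `κ`: `lim_{α → κ} h(α) = κ`. -/
def TendsToTop (h : GenBaire κ) : Prop :=
  ∀ γ : Idx κ, ∃ α : Idx κ, ∀ β : Idx κ, α ≤ β → γ ≤ h β

/-- `φ` is an `h`-slalom: `φ(α)` is a subset of `κ` of cardinality `|h(α)|`. -/
def IsSlalom (h : GenBaire κ) (φ : Idx κ → Set (Idx κ)) : Prop :=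
  ∀ α : Idx κ, #(φ α) = Cardinal.lift.{1} (h α).1.card

/-- The (total) slalom `φ` localizes `f` (`f ∈* φ`). -/
def Localizes (φ : Idx κ → Set (Idx κ)) (f : GenBaire κ) : Prop :=
  #{ α : Idx κ | f α ∉ φ α } < Cardinal.lift.{1} κ

/-- `𝔟_h(∈*)`. -/
def bLoc (h : GenBaire κ) : Cardinal.{1} :=
  sInf { c : Cardinal.{1} | ∃ F : Set (GenBaire κ),
    (∀ φ : Idx κ → Set (Idx κ), IsSlalom κ h φ → ∃ f ∈ F, ¬ Localizes κ φ f) ∧ c = #F }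

/-- `𝔡_h(∈*)`. -/
def dLoc (h : GenBaire κ) : Cardinal.{1} :=
  sInf { c : Cardinal.{1} | ∃ Φ : Set (Idx κ → Set (Idx κ)),
    (∀ φ ∈ Φ, IsSlalom κ h φ) ∧ (∀ f : GenBaire κ, ∃ φ ∈ Φ, Localizes κ φ f) ∧ c = #Φ }

/-- A partial `h`-slalom: a slalom whose domain is a subset of `κ` of cardinality `κ`.
(The values outside the domain are normalized to `∅`.) -/
structure PartialSlalom (h : GenBaire κ) where
  dom : Set (Idx κ)
  dom_card : #dom = Cardinal.lift.{1} κ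
  fn : Idx κ → Set (Idx κ)
  fn_card : ∀ α ∈ dom, #(fn α) = Cardinal.lift.{1} (h α).1.card
  eq_empty_of_not_mem : ∀ α ∉ dom, fn α = ∅

/-- The partial slalom `φ` localizes `f` (`f ∈* φ`). -/
def PLocalizes {h : GenBaire κ} (φ : PartialSlalom κ h) (f : GenBaire κ) : Prop :=
  #{ α : Idx κ | α ∈ φ.dom ∧ f α ∉ φ.fn α } < Cardinal.lift.{1} κ

/-- `𝔟_h(p∈*)`. -/
def bPLoc (h : GenBaire κ) : Cardinal.{1} :=
  sInf { c : Cardinal.{1} | ∃ F : Set (GenBaire κ),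
    (∀ φ : PartialSlalom κ h, ∃ f ∈ F, ¬ PLocalizes κ φ f) ∧ c = #F }

/-- `𝔡_h(p∈*)`. -/
def dPLoc (h : GenBaire κ) : Cardinal.{1} :=
  sInf { c : Cardinal.{1} | ∃ Φ : Set (PartialSlalom κ h),
    (∀ f : GenBaire κ, ∃ φ ∈ Φ, PLocalizes κ φ f) ∧ c = #Φ }

/-- `X ⊆ 2^κ` is open in the `<κ`-box topology. -/
def IsOpenK (X : Set (GenCantor κ)) : Prop :=
  ∀ x ∈ X, ∃ δ < κ.ord, { y : GenCantor κ | ∀ β : Idx κ, β.1 < δ → y β = x β } ⊆ X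

/-- `X ⊆ 2^κ` is dense: it meets every basic open set. -/
def IsDenseK (X : Set (GenCantor κ)) : Prop :=
  ∀ δ < κ.ord, ∀ σ : Ordinal → Bool, (cyl κ δ σ ∩ X).Nonempty

/-- Coordinatewise addition modulo 2 on `2^κ`. -/
def addMod2 (x y : GenCantor κ) : GenCantor κ := fun α => Bool.xor (x α) (y α)

/-- The identification of `σ ∈ 2^{<κ}` (with domain `[0, δ)`) with the element of
`2^κ` extending `σ` by `0`'s. -/
def extendZero (δ : Ordinal) (σ : Ordinal → Bool) : GenCantor κ :=
  fun α => if α.1 < δ then σ α.1 else false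

end

end GenCichon

/-! Call an interval `I_α` bad if no interval of `J` inside it is one on which `x` and `y`
agree. For regular `κ`, fewer than `κ` bad intervals means boundedly many. If they are bounded,
an element matching `(x, I)` agrees with `x` on cofinally many good `I_α`, hence with `y` on the
`J`-intervals inside them. If they are unbounded, keeping those of one parity leaves an unbounded
set `T` of pairwise non-adjacent bad indices; let `z` be `x` on the intervals of `T` and `¬ y`
elsewhere. Then `z` matches `(x, I)`, while a `J`-interval on which `z` agrees with `y` is covered
by intervals of `T`, so by non-adjacency lies in a single one, where `x = z = y`: impossible. -/

namespace GenCichon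

open Cardinal Set Ordinal Order

section

variable {κ : Cardinal.{0}}

def AgreeOn (x y : GenCantor κ) (a b : Ordinal) : Prop :=
  ∀ γ : Idx κ, a ≤ γ.1 → γ.1 < b → x γ = y γ

def HasAgreeingSubIntv (x y : GenCantor κ) (I J : IntervalPartition κ) (α : Ordinal) : Prop :=
  ∃ β : Idx κ, SubIntv κ J β.1 I α ∧ AgreeOn x y (J.pts β.1) (J.pts (β.1 + 1))

lemma mk_Idx : #(Idx κ) = lift.{1} κ := by
  rw [Cardinal.mk_Iio_ordinal, card_ord]

lemma mk_lt_iff_bddAbove (hκ : κ.IsRegular) {S : Set (Idx κ)} :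
    #S < lift.{1} κ ↔ BddAbove S := by
  have : NoMaxOrder (Idx κ) := (isSuccLimit_ord hκ.aleph0_le).isSuccPrelimit.noMaxOrder_Iio
  constructor
  · intro h
    by_contra hS
    have hcof := cof_le (not_bddAbove_iff_isCofinal.1 hS)
    rw [cof_Iio, ← lift_cof, hκ.cof_ord] at hcof
    exact hcof.not_gt h
  · rintro ⟨b, hb⟩
    have hord : ord #(Idx κ) = typeLT (Idx κ) := by
      rw [mk_Idx, ← lift_ord, type_lt_Iio]
    calc #S ≤ #(Iic b) := mk_le_mk_of_subset hb
      _ < #(Idx κ) := mk_Iic_lt b hord (mk_Idx.symm ▸ aleph0_le_lift.2 hκ.aleph0_le)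
      _ = lift.{1} κ := mk_Idx

lemma mod_two_eq_zero_or_one (o : Ordinal) : o % 2 = 0 ∨ o % 2 = 1 := by
  have h : o % 2 < 1 + 1 := by
    rw [one_add_one_eq_two]
    exact Ordinal.mod_lt o two_ne_zero
  exact Order.le_one_iff.mp (Order.lt_add_one_iff.mp h)

lemma add_one_mod_two_ne (o : Ordinal) : (o + 1) % 2 ≠ o % 2 := by
  have hdiv := Ordinal.div_add_mod o 2
  rcases mod_two_eq_zero_or_one o with h | h <;> rw [h] at hdiv ⊢ <;> rw [← hdiv]
  · rw [add_zero, Ordinal.mul_add_mod_self, Ordinal.mod_eq_of_lt one_lt_two]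
    exact one_ne_zero
  · rw [add_assoc, one_add_one_eq_two, ← mul_add_one, Ordinal.mul_mod]
    exact zero_ne_one

lemma exists_subset_not_bddAbove_add_one_lt {o : Ordinal} {S : Set (Iio o)}
    (hS : ¬ BddAbove S) :
    ∃ T ⊆ S, ¬ BddAbove T ∧ ∀ a ∈ T, ∀ b ∈ T, a < b → a.1 + 1 < b.1 := by
  let T (r : Ordinal) : Set (Iio o) := {a ∈ S | a.1 % 2 = r}
  have hsparse (r : Ordinal) : ∀ a ∈ T r, ∀ b ∈ T r, a < b → a.1 + 1 < b.1 := by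
    intro a ha b hb hab
    refine (Order.add_one_le_iff.2 (show a.1 < b.1 from hab)).lt_of_ne fun h =>
      add_one_mod_two_ne a.1 ?_
    rw [h, ha.2, hb.2]
  have hunion : S = T 0 ∪ T 1 := by
    ext a
    simp only [T, mem_union, mem_sep_iff, ← and_or_left]
    exact (and_iff_left (mod_two_eq_zero_or_one a.1)).symm
  by_cases h0 : BddAbove (T 0)
  · refine ⟨T 1, fun a ha => ha.1, fun h1 => hS ?_, hsparse 1⟩
    rw [hunion]
    exact h0.union h1
  · exact ⟨T 0, fun a ha => ha.1, h0, hsparse 0⟩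

namespace IntervalPartition

variable (I : IntervalPartition κ)

lemma strictMonoOn : StrictMonoOn I.pts (Iio κ.ord) :=
  fun _ _ _ hβ hαβ => I.strictMono _ _ hαβ hβ

lemma le_pts {α : Ordinal} (hα : α < κ.ord) : α ≤ I.pts α := by
  induction α using WellFoundedLT.induction with
  | _ α ih =>
    by_contra! h
    exact (ih _ h (I.lt_ord α hα)).not_gt (I.strictMono _ _ h hα)

def intvUnion (T : Set (Idx κ)) : Set (Idx κ) :=
  {p | ∃ α ∈ T, I.pts α.1 ≤ p.1 ∧ p.1 < I.pts (α.1 + 1)}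

lemma exists_subset_intv_of_subset_intvUnion (hκ : ℵ₀ ≤ κ) {T : Set (Idx κ)}
    (hsparse : ∀ a ∈ T, ∀ b ∈ T, a < b → a.1 + 1 < b.1) {a b : Ordinal} (ha : a < κ.ord)
    (hab : a < b) (hcov : ∀ p : Idx κ, a ≤ p.1 → p.1 < b → p ∈ I.intvUnion T) :
    ∃ α ∈ T, I.pts α.1 ≤ a ∧ b ≤ I.pts (α.1 + 1) := by
  have hlim := isSuccLimit_ord hκ
  obtain ⟨α₀, hα₀T, hle₀, hlt₀⟩ := hcov ⟨a, ha⟩ le_rfl hab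
  refine ⟨α₀, hα₀T, hle₀, ?_⟩
  by_contra! hb
  have hα₀ : α₀.1 + 1 < κ.ord := hlim.add_one_lt α₀.2
  -- the point `I.pts (α₀ + 1)` lies in some `I_α₁` with `α₁ ∈ T`, forcing `α₁ = α₀ + 1`
  obtain ⟨α₁, hα₁T, hle₁, hlt₁⟩ := hcov ⟨I.pts (α₀.1 + 1), I.lt_ord _ hα₀⟩ hlt₀.le hb
  have h01 : α₀.1 + 1 ≤ α₁.1 := Order.lt_add_one_iff.1
    ((I.strictMonoOn.lt_iff_lt hα₀ (hlim.add_one_lt α₁.2)).1 hlt₁)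
  have h10 : α₁.1 ≤ α₀.1 + 1 := (I.strictMonoOn.le_iff_le α₁.2 hα₀).1 hle₁
  exact (hsparse α₀ hα₀T α₁ hα₁T ((lt_add_one α₀.1).trans_le h01)).not_ge h10

end IntervalPartition

lemma exists_matches_not_matches (hκ : ℵ₀ ≤ κ) {x y : GenCantor κ}
    {I J : IntervalPartition κ} {T : Set (Idx κ)} (hT : ¬ BddAbove T)
    (hsparse : ∀ a ∈ T, ∀ b ∈ T, a < b → a.1 + 1 < b.1)
    (hbad : ∀ α ∈ T, ¬ HasAgreeingSubIntv x y I J α.1) :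
    ∃ z, Matches κ z x I ∧ ¬ Matches κ z y J := by
  classical
  have hlim := isSuccLimit_ord hκ
  let z := (I.intvUnion T).piecewise x (fun p => !y p)
  refine ⟨z, fun γ hγ => ?_, fun hzy => ?_⟩
  · obtain ⟨α, hαT, hγα⟩ := not_bddAbove_iff.1 hT ⟨γ, hγ⟩
    exact ⟨α.1, hγα.le, α.2, fun p h₁ h₂ => piecewise_eq_of_mem _ _ _ ⟨α, hαT, h₁, h₂⟩⟩
  obtain ⟨β, -, hβ, hzyβ⟩ := hzy 0 hlim.bot_lt
  have hcov (p : Idx κ) (h₁ : J.pts β ≤ p.1) (h₂ : p.1 < J.pts (β + 1)) :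
      p ∈ I.intvUnion T := by
    by_contra hp
    have hzp : z p = !y p := piecewise_eq_of_notMem _ _ _ hp
    exact Bool.not_ne_self _ (hzp.symm.trans (hzyβ p h₁ h₂))
  obtain ⟨α, hαT, hsub⟩ := I.exists_subset_intv_of_subset_intvUnion hκ hsparse
    (J.lt_ord β hβ) (J.strictMono _ _ (lt_add_one β) (hlim.add_one_lt hβ)) hcov
  refine hbad α hαT ⟨⟨β, hβ⟩, hsub, fun p h₁ h₂ => ?_⟩
  have hzp : z p = x p :=
    piecewise_eq_of_mem _ _ _ ⟨α, hαT, hsub.1.trans h₁, h₂.trans_le hsub.2⟩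
  exact hzp.symm.trans (hzyβ p h₁ h₂)

lemma bddAbove_of_matchSet_subset (hκ : ℵ₀ ≤ κ) {x y : GenCantor κ}
    {I J : IntervalPartition κ} (h : MatchSet κ x I ⊆ MatchSet κ y J) :
    BddAbove {α : Idx κ | ¬ HasAgreeingSubIntv x y I J α.1} := by
  by_contra hbad
  obtain ⟨T, hTS, hT, hsparse⟩ := exists_subset_not_bddAbove_add_one_lt hbad
  obtain ⟨z, hzx, hzy⟩ := exists_matches_not_matches hκ hT hsparse hTS
  exact hzy (h hzx)

lemma matchSet_subset_of_bddAbove (hκ : ℵ₀ ≤ κ) {x y : GenCantor κ}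
    {I J : IntervalPartition κ} (h : BddAbove {α : Idx κ | ¬ HasAgreeingSubIntv x y I J α.1}) :
    MatchSet κ x I ⊆ MatchSet κ y J := by
  obtain ⟨γ₀, hγ₀⟩ := h
  intro z hzx γ hγ
  obtain ⟨α, hδα, hα, hzxα⟩ :=
    hzx (max γ₀.1 (J.pts γ) + 1) ((isSuccLimit_ord hκ).add_one_lt (max_lt γ₀.2 (J.lt_ord γ hγ)))
  obtain ⟨hγ₀α, hγα⟩ := max_lt_iff.1 (Order.add_one_le_iff.1 hδα)
  obtain ⟨β, hsub, hxy⟩ : HasAgreeingSubIntv x y I J α := by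
    by_contra hbad
    exact (hγ₀ (show ⟨α, hα⟩ ∈ _ from hbad)).not_gt hγ₀α
  refine ⟨β.1, ?_, β.2, fun p h₁ h₂ =>
    (hzxα p (hsub.1.trans h₁) (h₂.trans_le hsub.2)).trans (hxy p h₁ h₂)⟩
  exact (J.strictMonoOn.le_iff_le hγ β.2).1 (hγα.le.trans ((I.le_pts hα).trans hsub.1))

end

theorem matchSet_subset_iff_general (κ : Cardinal.{0})
    (hreg : κ.IsRegular)
    (x y : GenCantor κ) (I J : IntervalPartition κ) :
    MatchSet κ x I ⊆ MatchSet κ y J ↔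
      #{ α : Idx κ | ¬ ∃ β : Idx κ, SubIntv κ J β.1 I α.1 ∧
          ∀ γ : Idx κ, J.pts β.1 ≤ γ.1 → γ.1 < J.pts (β.1 + 1) → x γ = y γ }
        < Cardinal.lift.{1} κ := by
  rw [mk_lt_iff_bddAbove hreg]
  exact ⟨bddAbove_of_matchSet_subset hreg.aleph0_le, matchSet_subset_of_bddAbove hreg.aleph0_le⟩

theorem matchSet_subset_iff (κ : Cardinal.{0})
    (hreg : κ.IsRegular) (hunc : Cardinal.aleph0 < κ)
    (x y : GenCantor κ) (I J : IntervalPartition κ) :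
    MatchSet κ x I ⊆ MatchSet κ y J ↔
      #{ α : Idx κ | ¬ ∃ β : Idx κ, SubIntv κ J β.1 I α.1 ∧
          ∀ γ : Idx κ, J.pts β.1 ≤ γ.1 → γ.1 < J.pts (β.1 + 1) → x γ = y γ }
        < Cardinal.lift.{1} κ :=
  matchSet_subset_iff_general κ hreg x y I J

end GenCichon
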